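/- The matrix D is symmetric positive definite. -/

import Mathlib

/-!
With `T = tridiag(-1, 2, -1)` the one-dimensional Dirichlet second-difference matrix,
`D = (2h₁²)⁻¹ (T ⊗ 1) + (2h₂²)⁻¹ (1 ⊗ T) + diag v`.
The matrix `T` factors as `BᵀB`, where `B : ℝᵐ → ℝᵐ⁺¹` takes forward differences of a vector
extended by zero at both ends; `B` is injective, so `T` is positive definite. Kronecker products
of positive definite matrices are positive definite, and adding the nonnegative diagonal `diag v`
preserves this.
-/

open Matrix
open scoped Kronecker

def dirichletLaplacian (m : ℕ) : Matrix (Fin m) (Fin m) ℝ :=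
  of fun i k => if i = k then 2 else if |(i : ℤ) - k| = 1 then -1 else 0

def forwardDiff (m : ℕ) : Matrix (Fin (m + 1)) (Fin m) ℝ :=
  of fun l i => (if l = i.castSucc then 1 else 0) - if l = i.succ then 1 else 0

theorem dirichletLaplacian_eq_conjTranspose_mul_self (m : ℕ) :
    dirichletLaplacian m = (forwardDiff m)ᴴ * forwardDiff m := by
  ext i k
  simp only [dirichletLaplacian, forwardDiff, mul_apply, conjTranspose_apply, of_apply,
    star_trivial, mul_sub, mul_ite, mul_one, mul_zero, Finset.sum_sub_distrib,
    Finset.sum_ite_eq', Finset.mem_univ, if_true, Fin.castSucc_inj, Fin.succ_inj]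
  simp only [Fin.ext_iff, Fin.val_castSucc, Fin.val_succ, abs_eq zero_le_one]
  split_ifs <;> (try norm_num) <;> omega

theorem forwardDiff_mulVec_castSucc {m : ℕ} (x : Fin m → ℝ) (a : Fin m) :
    (forwardDiff m *ᵥ x) a.castSucc = x a - ∑ k : Fin m, if (a : ℕ) = k + 1 then x k else 0 := by
  simp only [mulVec, dotProduct, forwardDiff, of_apply, Fin.castSucc_inj, sub_mul, ite_mul,
    one_mul, zero_mul, Finset.sum_sub_distrib, Finset.sum_ite_eq, Finset.mem_univ, if_true,
    sub_right_inj]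
  simp [Fin.ext_iff]

theorem forwardDiff_mulVec_injective (m : ℕ) : Function.Injective (forwardDiff m).mulVec := by
  refine (injective_iff_map_eq_zero (forwardDiff m).mulVecLin).2 fun x hx => ?_
  -- row `a.castSucc` of `B x = 0` reads `x a = x (a - 1)`, with the boundary value `x (-1) = 0`
  have hx_eq : ∀ a : Fin m, x a = ∑ k : Fin m, if (a : ℕ) = k + 1 then x k else 0 := fun a => by
    simpa [sub_eq_zero, forwardDiff_mulVec_castSucc] using congrFun hx a.castSucc
  suffices ∀ a (ha : a < m), x ⟨a, ha⟩ = 0 from funext fun a => this a a.2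
  intro a
  induction a with
  | zero => intro ha; simpa using hx_eq ⟨0, ha⟩
  | succ b ih =>
    intro ha
    rw [hx_eq, Finset.sum_eq_single ⟨b, by omega⟩]
    · simp [ih]
    · intro k _ hk
      simp only [ne_eq, Fin.ext_iff] at hk
      simp only [ite_eq_right_iff]
      omega
    · simp

theorem dirichletLaplacian_posDef (m : ℕ) : (dirichletLaplacian m).PosDef := by
  rw [dirichletLaplacian_eq_conjTranspose_mul_self]
  exact .conjTranspose_mul_self _ (forwardDiff_mulVec_injective m)

theorem eq_smul_kronecker_add_smul_kronecker_add_diagonal {m n : ℕ} (c₁ c₂ : ℝ)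
    (v : Fin m × Fin n → ℝ) (D : Matrix (Fin m × Fin n) (Fin m × Fin n) ℝ)
    (hDdiag : ∀ p : Fin m × Fin n, D p p = 2 * c₁ + 2 * c₂ + v p)
    (hDvert : ∀ (i : Fin m) (j j' : Fin n), |(j : ℤ) - (j' : ℤ)| = 1 → D (i, j) (i, j') = -c₂)
    (hDhor : ∀ (i i' : Fin m) (j : Fin n), |(i : ℤ) - (i' : ℤ)| = 1 → D (i, j) (i', j) = -c₁)
    (hDzero : ∀ p q : Fin m × Fin n, p ≠ q →
      ¬(p.1 = q.1 ∧ |(p.2 : ℤ) - (q.2 : ℤ)| = 1) →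
      ¬(p.2 = q.2 ∧ |(p.1 : ℤ) - (q.1 : ℤ)| = 1) → D p q = 0) :
    D = c₁ • (dirichletLaplacian m ⊗ₖ 1) + c₂ • (1 ⊗ₖ dirichletLaplacian n) + diagonal v := by
  ext ⟨i, j⟩ ⟨i', j'⟩
  simp only [Matrix.add_apply, Matrix.smul_apply, kronecker_apply, one_apply, diagonal_apply,
    dirichletLaplacian, of_apply, Prod.mk.injEq, smul_eq_mul]
  by_cases hdiag : i = i' ∧ j = j'
  · obtain ⟨rfl, rfl⟩ := hdiag
    simp only [hDdiag, if_true, and_self]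
    ring
  by_cases hvert : i = i' ∧ |(j : ℤ) - j'| = 1
  · obtain ⟨rfl, h⟩ := hvert
    have hne : j ≠ j' := by rintro rfl; simp at h
    simp [hDvert i j j' h, hne, h]
  by_cases hhor : j = j' ∧ |(i : ℤ) - i'| = 1
  · obtain ⟨rfl, h⟩ := hhor
    have hne : i ≠ i' := by rintro rfl; simp at h
    simp [hDhor i i' j h, hne, h]
  rw [hDzero (i, j) (i', j') (by simpa using hdiag) hvert hhor]
  simp only [not_and] at hdiag hvert hhor
  split_ifs <;> simp_all

theorem stmt_1 (m n : ℕ)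
    (h₁ h₂ : ℝ) (hh₁ : 0 < h₁) (hh₂ : 0 < h₂)
    (v : Fin m × Fin n → ℝ) (hv : ∀ p, 0 ≤ v p)
    (D : Matrix (Fin m × Fin n) (Fin m × Fin n) ℝ)
    (hDdiag : ∀ p : Fin m × Fin n, D p p = 1 / h₁ ^ 2 + 1 / h₂ ^ 2 + v p)
    (hDvert : ∀ (i : Fin m) (j j' : Fin n), |(j : ℤ) - (j' : ℤ)| = 1 →
      D (i, j) (i, j') = -(1 / (2 * h₂ ^ 2)))
    (hDhor : ∀ (i i' : Fin m) (j : Fin n), |(i : ℤ) - (i' : ℤ)| = 1 →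
      D (i, j) (i', j) = -(1 / (2 * h₁ ^ 2)))
    (hDzero : ∀ p q : Fin m × Fin n, p ≠ q →
      ¬(p.1 = q.1 ∧ |(p.2 : ℤ) - (q.2 : ℤ)| = 1) →
      ¬(p.2 = q.2 ∧ |(p.1 : ℤ) - (q.1 : ℤ)| = 1) → D p q = 0) :
    D.IsSymm ∧ D.PosDef := by
  have hD := eq_smul_kronecker_add_smul_kronecker_add_diagonal _ _ v D
    (fun p => by rw [hDdiag]; ring) hDvert hDhor hDzero
  have hPD : D.PosDef := hD ▸
    ((((dirichletLaplacian_posDef m).kronecker .one).smul (by positivity)).add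
      ((PosDef.one.kronecker (dirichletLaplacian_posDef n)).smul (by positivity))).add_posSemidef
      (.diagonal hv)
  exact ⟨isHermitian_iff_isSymm.1 hPD.isHermitian, hPD⟩
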